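/- In the robust phase estimation recursion, consecutive estimates always satisfy d(θ_l, θ_{l+1}) ≤ 2^{-l}π. Consequently, if d(φ_j, 2^j E) < π/3 holds for all j ≤ m but possibly fails for j > m, then the final output after M ≥ m rounds satisfies d(θ_M, E) ≤ 2^{-m}·π/3 + 2^{-m+1}π ≤ 2^{-m+3}·π/3. -/
import Mathlib


/-- Distance between two angles on the circle `ℝ / 2πℤ`. -/
noncomputable def circleDist (θ φ : ℝ) : ℝ := ⨅ k : ℤ, |θ - φ + 2 * (k : ℝ) * Real.pi|

open Real


lemma circleDist_bdd (θ φ : ℝ) :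
    BddBelow (Set.range fun k : ℤ => |θ - φ + 2 * (k : ℝ) * π|) :=
  ⟨0, by rintro x ⟨k, rfl⟩; positivity⟩

lemma circleDist_le (θ φ : ℝ) (k : ℤ) : circleDist θ φ ≤ |θ - φ + 2 * (k : ℝ) * π| :=
  ciInf_le (circleDist_bdd θ φ) k

lemma circleDist_nonneg (θ φ : ℝ) : 0 ≤ circleDist θ φ :=
  le_ciInf fun k => abs_nonneg _

lemma le_circleDist (θ φ c : ℝ) (h : ∀ k : ℤ, c ≤ |θ - φ + 2 * (k : ℝ) * π|) :
    c ≤ circleDist θ φ := le_ciInf h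

lemma circleDist_symm_le (θ φ : ℝ) : circleDist θ φ ≤ circleDist φ θ := by
  apply le_circleDist
  intro k
  calc circleDist θ φ ≤ |θ - φ + 2 * ((-k : ℤ) : ℝ) * π| := circleDist_le θ φ (-k)
    _ = |φ - θ + 2 * (k : ℝ) * π| := by push_cast; rw [← abs_neg]; ring_nf

lemma circleDist_symm (θ φ : ℝ) : circleDist θ φ = circleDist φ θ :=
  le_antisymm (circleDist_symm_le θ φ) (circleDist_symm_le φ θ)

lemma circleDist_triangle (a b c : ℝ) :
    circleDist a c ≤ circleDist a b + circleDist b c := by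
  apply le_ciInf_add_ciInf
  intro k k'
  calc circleDist a c ≤ |a - c + 2 * ((k + k' : ℤ) : ℝ) * π| := circleDist_le a c (k + k')
    _ ≤ |a - b + 2 * (k : ℝ) * π| + |b - c + 2 * (k' : ℝ) * π| := by
        push_cast
        calc |a - c + 2 * ((k : ℝ) + k') * π|
            = |(a - b + 2 * (k:ℝ) * π) + (b - c + 2 * (k':ℝ) * π)| := by ring_nf
          _ ≤ _ := abs_add_le _ _

lemma exists_lt_of_circleDist_lt {θ φ c : ℝ} (h : circleDist θ φ < c) :
    ∃ k : ℤ, |θ - φ + 2 * (k : ℝ) * π| < c :=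
  exists_lt_of_ciInf_lt h

/-- For positive `s`, some integer multiple of `s` brings `c` within `s/2` of zero. -/
lemma exists_int_abs_add_mul_le {s : ℝ} (hs : 0 < s) (c : ℝ) :
    ∃ n : ℤ, |c + s * n| ≤ s / 2 := by
  refine ⟨-round (c / s), ?_⟩
  have h := abs_sub_round (c / s)
  have : c + s * (-round (c / s) : ℤ) = s * (c / s - round (c / s)) := by
    push_cast; field_simp; ring
  rw [this, abs_mul, abs_of_pos hs]
  calc s * |c / s - round (c / s)| ≤ s * (1 / 2) := by
        exact mul_le_mul_of_nonneg_left h hs.le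
    _ = s / 2 := by ring

/-- Decompose an integer as `2^j * n' + k` with `k ∈ [0, 2^j)`. -/
lemma int_decompose (n : ℤ) (j : ℕ) :
    ∃ (k : Fin (2 ^ j)) (n' : ℤ), n = 2 ^ j * n' + (k : ℤ) := by
  have hpos : (0 : ℤ) < 2 ^ j := by positivity
  have h1 : 0 ≤ n % 2 ^ j := Int.emod_nonneg n (by positivity)
  have h2 : n % 2 ^ j < 2 ^ j := Int.emod_lt_of_pos n hpos
  refine ⟨⟨(n % 2 ^ j).toNat, ?_⟩, n / 2 ^ j, ?_⟩
  · have h3 : ((2 : ℤ) ^ j) = ((2 ^ j : ℕ) : ℤ) := by push_cast; ring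
    omega
  · have h4 : ((n % 2 ^ j).toNat : ℤ) = n % 2 ^ j := Int.toNat_of_nonneg h1
    rw [h4]
    exact (Int.mul_ediv_add_emod n (2 ^ j)).symm

/-- The candidate set at level `j` is a `2^{-j}π`-net of the circle. -/
lemma net_lemma (j : ℕ) (x y : ℝ) :
    ∃ k : Fin (2 ^ j),
      circleDist ((2 : ℝ)⁻¹ ^ j * (2 * π * (k : ℝ) + y)) x ≤ (2 : ℝ)⁻¹ ^ j * π := by
  have hs : 0 < (2 : ℝ)⁻¹ ^ j * (2 * π) := by positivity
  obtain ⟨n, hn⟩ := exists_int_abs_add_mul_le hs ((2 : ℝ)⁻¹ ^ j * y - x)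
  obtain ⟨k, n', hkn⟩ := int_decompose n j
  refine ⟨k, ?_⟩
  have ha : (2 : ℝ)⁻¹ ^ j * (2 : ℝ) ^ j = 1 := by
    rw [← mul_pow]; norm_num
  calc circleDist ((2 : ℝ)⁻¹ ^ j * (2 * π * (k : ℝ) + y)) x
      ≤ |(2 : ℝ)⁻¹ ^ j * (2 * π * (k : ℝ) + y) - x + 2 * (n' : ℝ) * π| := circleDist_le _ _ n'
    _ = |(2 : ℝ)⁻¹ ^ j * y - x + (2 : ℝ)⁻¹ ^ j * (2 * π) * (n : ℝ)| := by
        congr 1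
        have hcast : (n : ℝ) = 2 ^ j * (n' : ℝ) + (k : ℝ) := by
          rw [hkn]; push_cast; ring
        rw [hcast]
        linear_combination (-(2 * π * (n' : ℝ))) * ha
    _ ≤ (2 : ℝ)⁻¹ ^ j * (2 * π) / 2 := hn
    _ = (2 : ℝ)⁻¹ ^ j * π := by ring

/-- Distinct candidates at level `j` are at circle distance at least `2^{-j}·2π`. -/
lemma sep_lemma (j : ℕ) (y : ℝ) (k k' : Fin (2 ^ j)) (hkk : k ≠ k') :
    (2 : ℝ)⁻¹ ^ j * (2 * π) ≤
      circleDist ((2 : ℝ)⁻¹ ^ j * (2 * π * (k : ℝ) + y))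
        ((2 : ℝ)⁻¹ ^ j * (2 * π * (k' : ℝ) + y)) := by
  have hs : 0 < (2 : ℝ)⁻¹ ^ j * (2 * π) := by positivity
  have ha : (2 : ℝ)⁻¹ ^ j * (2 : ℝ) ^ j = 1 := by rw [← mul_pow]; norm_num
  apply le_circleDist
  intro n
  have hne : ((k : ℤ) - (k' : ℤ) + 2 ^ j * n) ≠ 0 := by
    intro h0
    have hk1 : (k : ℕ) < 2 ^ j := k.isLt
    have hk2 : (k' : ℕ) < 2 ^ j := k'.isLt
    have hkk' : (k : ℕ) ≠ (k' : ℕ) := fun h => hkk (Fin.ext h)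
    rcases eq_or_ne n 0 with rfl | hn
    · simp at h0; omega
    · have h1 : (1 : ℤ) ≤ |n| := Int.one_le_abs hn
      have h2 : ((k : ℤ) - (k' : ℤ)) = -(2 ^ j * n) := by omega
      have h3 : |(k : ℤ) - (k' : ℤ)| < 2 ^ j := by
        have e1 : ((k : ℕ) : ℤ) < (2 : ℤ) ^ j := by exact_mod_cast hk1
        have e2 : ((k' : ℕ) : ℤ) < (2 : ℤ) ^ j := by exact_mod_cast hk2
        rw [abs_lt]; omega
      rw [h2, abs_neg, abs_mul] at h3
      have h4 : |(2 : ℤ) ^ j| = 2 ^ j := abs_of_nonneg (by positivity)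
      rw [h4] at h3
      nlinarith [pow_pos (by norm_num : (0:ℤ) < 2) j]
  have key : (2 : ℝ)⁻¹ ^ j * (2 * π * (k : ℝ) + y) - (2 : ℝ)⁻¹ ^ j * (2 * π * (k' : ℝ) + y)
        + 2 * (n : ℝ) * π
      = (2 : ℝ)⁻¹ ^ j * (2 * π) * (((k : ℤ) - (k' : ℤ) + 2 ^ j * n : ℤ) : ℝ) := by
    push_cast
    linear_combination (-(2 * π * (n : ℝ))) * ha
  rw [key, abs_mul, abs_of_pos hs]
  have h5 : (1 : ℝ) ≤ |(((k : ℤ) - (k' : ℤ) + 2 ^ j * n : ℤ) : ℝ)| := by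
    rw [← Int.cast_abs]
    exact_mod_cast Int.one_le_abs hne
  exact le_mul_of_one_le_right hs.le h5

/-- In the robust phase estimation recursion, consecutive estimates satisfy
`d(θ_l, θ_{l+1}) ≤ 2^{-l} π`; consequently, if `d(φ j, 2^j E) < π/3` holds for all `j ≤ m`
(but possibly not beyond), the final output after `M ≥ m` rounds satisfies
`d(θ_M, E) ≤ 2^{-m} π/3 + 2^{-m+1} π ≤ 2^{-m+3} π/3`.
Here `θ 0 = 0` plays the role of `θ_{-1}` and `θ (j+1)` that of `θ_j`. -/
theorem robust_phase_estimation_robustness (E : ℝ) (M m : ℕ) (hm : m ≤ M) (φ θ : ℕ → ℝ)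
    (hθ0 : θ 0 = 0)
    (hmem : ∀ j ≤ M, ∃ k : Fin (2 ^ j),
      θ (j + 1) = (2 : ℝ)⁻¹ ^ j * (2 * Real.pi * (k : ℝ) + φ j))
    (hmin : ∀ j ≤ M, ∀ k : Fin (2 ^ j),
      circleDist (θ (j + 1)) (θ j) ≤
        circleDist ((2 : ℝ)⁻¹ ^ j * (2 * Real.pi * (k : ℝ) + φ j)) (θ j)) :
    (∀ l, l + 1 ≤ M → circleDist (θ (l + 1)) (θ (l + 2)) ≤ (2 : ℝ)⁻¹ ^ l * Real.pi) ∧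
    ((∀ j ≤ m, circleDist (φ j) (2 ^ j * E) < Real.pi / 3) →
      circleDist (θ (M + 1)) E ≤
          (2 : ℝ)⁻¹ ^ m * (Real.pi / 3) + 2 * (2 : ℝ)⁻¹ ^ m * Real.pi ∧
      (2 : ℝ)⁻¹ ^ m * (Real.pi / 3) + 2 * (2 : ℝ)⁻¹ ^ m * Real.pi ≤
          8 * (2 : ℝ)⁻¹ ^ m * (Real.pi / 3)) := by
  have hhalf : (0:ℝ) < 2⁻¹ := by norm_num
  have claim1 : ∀ l, l + 1 ≤ M → circleDist (θ (l + 1)) (θ (l + 2)) ≤ (2 : ℝ)⁻¹ ^ l * π := by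
    intro l hl
    obtain ⟨k, hk⟩ := net_lemma (l + 1) (θ (l + 1)) (φ (l + 1))
    rw [circleDist_symm]
    calc circleDist (θ (l + 2)) (θ (l + 1)) ≤ _ := hmin (l + 1) hl k
      _ ≤ (2 : ℝ)⁻¹ ^ (l + 1) * π := hk
      _ ≤ (2 : ℝ)⁻¹ ^ l * π := by
          rw [pow_succ]
          nlinarith [pi_pos, pow_pos hhalf l]
  refine ⟨claim1, ?_⟩
  intro hφ
  -- accuracy through round m
  have acc : ∀ j, j ≤ m → circleDist (θ (j + 1)) E < (2 : ℝ)⁻¹ ^ j * (π / 3) := by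
    intro j
    induction j with
    | zero =>
      intro _
      obtain ⟨k, hk⟩ := hmem 0 (by omega)
      have hk0 : ((k : ℕ) : ℝ) = 0 := by
        have := k.isLt; interval_cases h : (k : ℕ) <;> simp
      rw [hk0] at hk
      simp only [pow_zero, one_mul, mul_zero, zero_add] at hk ⊢
      have := hφ 0 (by omega)
      simpa [hk] using this
    | succ j ih =>
      intro hj
      have hIH := ih (by omega)
      have hφj := hφ (j + 1) hj
      obtain ⟨n, hn⟩ := exists_lt_of_circleDist_lt hφj
      obtain ⟨k0, n', hkn⟩ := int_decompose n (j + 1)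
      set a : ℝ := (2 : ℝ)⁻¹ ^ (j + 1) with haa
      have hapos : 0 < a := pow_pos hhalf _
      have ha : a * (2 : ℝ) ^ (j + 1) = 1 := by rw [haa, ← mul_pow]; norm_num
      set cand : ℝ := a * (2 * π * ((k0 : ℕ) : ℝ) + φ (j + 1)) with hcand_def
      have hcand : circleDist cand E < a * (π / 3) := by
        have key : cand - E + 2 * (n' : ℝ) * π
            = a * (φ (j + 1) - 2 ^ (j + 1) * E + 2 * (n : ℝ) * π) := by
          have hcast : (n : ℝ) = 2 ^ (j + 1) * (n' : ℝ) + ((k0 : ℕ) : ℝ) := by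
            rw [hkn]; push_cast; ring
          rw [hcand_def, hcast]
          linear_combination (-(2 * π * (n' : ℝ)) + E) * ha
        calc circleDist cand E ≤ |cand - E + 2 * (n' : ℝ) * π| := circleDist_le _ _ n'
          _ = a * |φ (j + 1) - 2 ^ (j + 1) * E + 2 * (n : ℝ) * π| := by
              rw [key, abs_mul, abs_of_pos hapos]
          _ < a * (π / 3) := by exact mul_lt_mul_of_pos_left hn hapos
      obtain ⟨k1, hk1⟩ := hmem (j + 1) (by omega)
      have hstep : circleDist (θ (j + 2)) (θ (j + 1)) < a * (π / 3) + (2 : ℝ)⁻¹ ^ j * (π / 3) := by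
        calc circleDist (θ (j + 2)) (θ (j + 1)) ≤ circleDist cand (θ (j + 1)) :=
              hmin (j + 1) (by omega) k0
          _ ≤ circleDist cand E + circleDist E (θ (j + 1)) := circleDist_triangle _ _ _
          _ < a * (π / 3) + (2 : ℝ)⁻¹ ^ j * (π / 3) := by
              rw [circleDist_symm E]
              exact add_lt_add hcand hIH
      have hclose : circleDist (θ (j + 2)) cand < a * (2 * π) := by
        calc circleDist (θ (j + 2)) cand
            ≤ circleDist (θ (j + 2)) (θ (j + 1)) + circleDist (θ (j + 1)) cand :=
              circleDist_triangle _ _ _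
          _ ≤ circleDist (θ (j + 2)) (θ (j + 1)) +
              (circleDist (θ (j + 1)) E + circleDist E cand) := by
              have := circleDist_triangle (θ (j + 1)) E cand
              linarith
          _ < (a * (π / 3) + (2 : ℝ)⁻¹ ^ j * (π / 3)) +
              ((2 : ℝ)⁻¹ ^ j * (π / 3) + a * (π / 3)) := by
              rw [circleDist_symm E]
              exact add_lt_add hstep (add_lt_add hIH hcand)
          _ = a * (2 * π) := by rw [haa, pow_succ]; ring
      have hkeq : k1 = k0 := by
        by_contra hne
        have hsep := sep_lemma (j + 1) (φ (j + 1)) k1 k0 hne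
        rw [← hk1, ← hcand_def] at hsep
        exact absurd (lt_of_le_of_lt hsep hclose) (lt_irrefl _)
      have hθeq : θ (j + 2) = cand := by rw [hk1, hkeq, hcand_def]
      rw [hθeq]
      exact hcand
  -- chain the consecutive-step bounds from round m to round M
  have chain : ∀ N, m ≤ N → N ≤ M →
      circleDist (θ (N + 1)) E ≤
        (2 : ℝ)⁻¹ ^ m * (π / 3) + 2 * ((2 : ℝ)⁻¹ ^ m - (2 : ℝ)⁻¹ ^ N) * π := by
    intro N hN
    induction N, hN using Nat.le_induction with
    | base =>
      intro _
      have := (acc m le_rfl).le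
      simpa using this
    | succ N hN ih =>
      intro hNM
      have h1 := claim1 N (by omega)
      rw [circleDist_symm] at h1
      calc circleDist (θ (N + 2)) E
          ≤ circleDist (θ (N + 2)) (θ (N + 1)) + circleDist (θ (N + 1)) E :=
            circleDist_triangle _ _ _
        _ ≤ (2 : ℝ)⁻¹ ^ N * π +
            ((2 : ℝ)⁻¹ ^ m * (π / 3) + 2 * ((2 : ℝ)⁻¹ ^ m - (2 : ℝ)⁻¹ ^ N) * π) :=
            add_le_add h1 (ih (by omega))
        _ = (2 : ℝ)⁻¹ ^ m * (π / 3) + 2 * ((2 : ℝ)⁻¹ ^ m - (2 : ℝ)⁻¹ ^ (N + 1)) * π := by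
            rw [pow_succ]; ring
  constructor
  · calc circleDist (θ (M + 1)) E
        ≤ (2 : ℝ)⁻¹ ^ m * (π / 3) + 2 * ((2 : ℝ)⁻¹ ^ m - (2 : ℝ)⁻¹ ^ M) * π := chain M hm le_rfl
      _ ≤ (2 : ℝ)⁻¹ ^ m * (π / 3) + 2 * (2 : ℝ)⁻¹ ^ m * π := by
          nlinarith [pi_pos, pow_pos hhalf M]
  · nlinarith [pi_pos, pow_pos hhalf m]
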